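/- For every n ≥ 3, there exists an (S_1×S_{n-1})-equivariant acyclic matching on the subposet of F(Δ(Π̄_n)) consisting of all nonempty chains of Π̄_n that contain no partition of the form v_k = {{1,k}} ∪ {{j} : j ≠ 1,k}, such that the one-element chain α_n = { {{1},{2,…,n}} } is the only critical element. -/

import Mathlib

/-- The poset `Π̄_n`: set partitions of `Fin n` (modeled as setoids, ordered by refinement,
with the finer partition smaller), with the minimum `⊥` and maximum `⊤` removed. -/
def BarPi (n : ℕ) : Type :=
  {s : Setoid (Fin n) // s ≠ ⊥ ∧ s ≠ ⊤}

instance (n : ℕ) : PartialOrder (BarPi n) :=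
  inferInstanceAs (PartialOrder {s : Setoid (Fin n) // s ≠ ⊥ ∧ s ≠ ⊤})

/-- The natural (relabeling) action of the symmetric group on setoids of `Fin n`. -/
instance permSetoidAction (n : ℕ) : MulAction (Equiv.Perm (Fin n)) (Setoid (Fin n)) where
  smul g s := Setoid.comap (⇑g⁻¹) s
  one_smul s := Setoid.ext fun x y => Iff.rfl
  mul_smul g h s := Setoid.ext fun x y => Iff.rfl

theorem perm_smul_setoid_rel (n : ℕ) (g : Equiv.Perm (Fin n)) (s : Setoid (Fin n))
    (x y : Fin n) : (g • s) x y ↔ s (g⁻¹ x) (g⁻¹ y) := Iff.rfl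

theorem perm_smul_bot (n : ℕ) (g : Equiv.Perm (Fin n)) :
    g • (⊥ : Setoid (Fin n)) = ⊥ := by
  apply Setoid.ext
  intro x y
  rw [perm_smul_setoid_rel]
  constructor
  · intro h
    have : (⊥ : Setoid (Fin n)) (g⁻¹ x) (g⁻¹ y) := h
    rw [show ⇑(⊥ : Setoid (Fin n)) = (· = ·) from Setoid.bot_def] at this
    have := congrArg g this
    simpa using this
  · intro h
    have : x = y := by rwa [show ⇑(⊥ : Setoid (Fin n)) = (· = ·) from Setoid.bot_def] at h
    subst this
    exact (⊥ : Setoid (Fin n)).iseqv.refl _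

theorem perm_smul_top (n : ℕ) (g : Equiv.Perm (Fin n)) :
    g • (⊤ : Setoid (Fin n)) = ⊤ := by
  apply Setoid.ext
  intro x y
  rw [perm_smul_setoid_rel]

theorem perm_smul_mono (n : ℕ) (g : Equiv.Perm (Fin n)) :
    Monotone (fun s : Setoid (Fin n) => g • s) := by
  intro s t h
  intro x y hxy
  exact Setoid.le_def.mp h hxy

/-- The relabeling action of the symmetric group on `Π̄_n`. -/
instance permBarPiAction (n : ℕ) : MulAction (Equiv.Perm (Fin n)) (BarPi n) where
  smul g s := ⟨g • s.1, by
      constructor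
      · intro h
        apply s.2.1
        have := congrArg (fun t => g⁻¹ • t) h
        simpa [perm_smul_bot] using this
      · intro h
        apply s.2.2
        have := congrArg (fun t => g⁻¹ • t) h
        simpa [perm_smul_top] using this⟩
  one_smul s := Subtype.ext (one_smul _ _)
  mul_smul g h s := Subtype.ext (mul_smul g h s.1)

theorem perm_smul_barPi_mono (n : ℕ) (g : Equiv.Perm (Fin n)) :
    Monotone (fun s : BarPi n => g • s) := by
  intro s t h
  exact perm_smul_mono n g h

/-- The subgroup `S_1 × S_{n-1}` of permutations fixing the distinguished element `0`
(playing the role of `1 ∈ [n]`). -/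
def S1Sn (n : ℕ) [NeZero n] : Subgroup (Equiv.Perm (Fin n)) :=
  MulAction.stabilizer (Equiv.Perm (Fin n)) (0 : Fin n)

/-- The set of partitions in `Π̄_n` in which every block not containing the distinguished
element `0` is a singleton. -/
def blockSet (n : ℕ) [NeZero n] : Set (BarPi n) :=
  {s | ∀ x y : Fin n, s.1 x y → s.1 x 0 ∨ x = y}

/-- The face poset of the nerve of `Π̄_n`: nonempty finite chains in `Π̄_n`, ordered
by inclusion. -/
def FacePoset (n : ℕ) : Type :=
  {c : Finset (BarPi n) // c.Nonempty ∧ IsChain (· ≤ ·) (↑c : Set (BarPi n))}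

instance (n : ℕ) : PartialOrder (FacePoset n) where
  le c d := c.1 ⊆ d.1
  le_refl c := subset_rfl
  le_trans a b c hab hbc := Finset.Subset.trans hab hbc
  le_antisymm a b hab hba := Subtype.ext (Finset.Subset.antisymm hab hba)

noncomputable instance (n : ℕ) : DecidableEq (BarPi n) := Classical.decEq _

/-- The relabeling action of the symmetric group on the face poset. -/
noncomputable instance permFaceAction (n : ℕ) : MulAction (Equiv.Perm (Fin n)) (FacePoset n) where
  smul g c := ⟨c.1.image (fun s => g • s), by
    constructor
    · exact c.2.1.image _
    · intro x hx y hy hxy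
      simp only [Finset.coe_image, Set.mem_image, Finset.mem_coe] at hx hy
      obtain ⟨x', hx', rfl⟩ := hx
      obtain ⟨y', hy', rfl⟩ := hy
      have hxy' : x' ≠ y' := fun h => hxy (by rw [h])
      rcases c.2.2 hx' hy' hxy' with h | h
      · exact Or.inl (perm_smul_barPi_mono n g h)
      · exact Or.inr (perm_smul_barPi_mono n g h)⟩
  one_smul c := by
    apply Subtype.ext
    show c.1.image (fun s => (1 : Equiv.Perm (Fin n)) • s) = c.1
    rw [show (fun s : BarPi n => (1 : Equiv.Perm (Fin n)) • s) = id from funext fun s => one_smul _ s]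
    exact Finset.image_id
  mul_smul g h c := by
    apply Subtype.ext
    show c.1.image (fun s => (g * h) • s) = (c.1.image (fun s => h • s)).image (fun s => g • s)
    rw [Finset.image_image, show ((fun s : BarPi n => g • s) ∘ (fun s => h • s)) = (fun s => (g * h) • s) from funext fun s => (mul_smul g h s).symm]

/-- `C_n`: the chains of cardinality `n - 2` in `Π̄_n` all of whose members lie in
`blockSet n`, i.e. are partitions in which every block not containing `0` is a singleton. -/
def Cn (n : ℕ) [NeZero n] : Set (FacePoset n) :=
  {c | (↑c.1 : Set (BarPi n)) ⊆ blockSet n ∧ c.1.card = n - 2}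

/-- The partition `{{1}, {2, …, n}}` of `[n]`, i.e. `{{0}, {1, …, n-1}}` of `Fin n`,
as a setoid. -/
def alphaSetoid (n : ℕ) [NeZero n] : Setoid (Fin n) :=
  ⟨fun x y => x = y ∨ (x ≠ 0 ∧ y ≠ 0), by
    constructor
    · intro x; exact Or.inl rfl
    · rintro x y (rfl | ⟨hx, hy⟩)
      · exact Or.inl rfl
      · exact Or.inr ⟨hy, hx⟩
    · rintro x y z (rfl | ⟨hx, hy⟩) (rfl | ⟨hy', hz⟩)
      · exact Or.inl rfl
      · exact Or.inr ⟨hy', hz⟩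
      · exact Or.inr ⟨hx, hy⟩
      · exact Or.inr ⟨hx, hz⟩⟩

/-- The partition `{{1}, {2, …, n}}` as an element of `Π̄_n` (requires `n ≥ 3`). -/
def alphaBar (n : ℕ) [NeZero n] (hn : 3 ≤ n) : BarPi n :=
  ⟨alphaSetoid n, by
    constructor
    · intro h
      have h12 : alphaSetoid n ⟨1, by omega⟩ ⟨2, by omega⟩ :=
        Or.inr ⟨by simp [Fin.ext_iff], by simp [Fin.ext_iff]⟩
      rw [h] at h12
      have : (⟨1, by omega⟩ : Fin n) = ⟨2, by omega⟩ := h12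
      simp [Fin.ext_iff] at this
    · intro h
      have h01 : (⊤ : Setoid (Fin n)) 0 ⟨1, by omega⟩ := trivial
      rw [← h] at h01
      rcases h01 with h01 | ⟨h0, _⟩
      · have : (0 : Fin n) = ⟨1, by omega⟩ := h01
        simp [Fin.ext_iff] at this
      · exact h0 rfl⟩

/-- The one-element chain `α_n = {{{1},{2,…,n}}}` in the face poset. -/
def alphaChain (n : ℕ) [NeZero n] (hn : 3 ≤ n) : FacePoset n :=
  ⟨{alphaBar n hn}, Finset.singleton_nonempty _, by
    simp only [Finset.coe_singleton]
    exact Set.Subsingleton.isChain (Set.subsingleton_singleton)⟩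

section Matchings

variable {P : Type*} [PartialOrder P]

/-- `b` covers `a` within the subposet on the subset `S`. -/
def CovByWithin (S : Set P) (a b : P) : Prop :=
  a ∈ S ∧ b ∈ S ∧ a < b ∧ ∀ c ∈ S, a < c → ¬c < b

/-- A partial matching on the subposet of `P` induced on `S`, regarded as a set of
pairs of elements of `P`: every pair is a covering pair within `S`, and every element
occurs in at most one pair. -/
def IsMatchingOn (S : Set P) (M : Set (P × P)) : Prop :=
  (∀ p ∈ M, CovByWithin S p.1 p.2) ∧
    ∀ p ∈ M, ∀ q ∈ M, (p.1 = q.1 ∨ p.1 = q.2 ∨ p.2 = q.1 ∨ p.2 = q.2) → p = q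

/-- A partial matching on the subposet induced on `S` is acyclic if there is no cycle
`a₁ ⋖ b₁ ⋗ a₂ ⋖ b₂ ⋗ ⋯ ⋗ a_k ⋖ b_k ⋗ a₁` with `k ≥ 2`, all `aᵢ` distinct and
`(aᵢ, bᵢ) ∈ M` (indices mod `k`, covering relations within `S`). -/
def IsAcyclicMatchingOn (S : Set P) (M : Set (P × P)) : Prop :=
  IsMatchingOn S M ∧
    ¬∃ (k : ℕ) (a b : ZMod k → P), 2 ≤ k ∧ Function.Injective a ∧
      ∀ i : ZMod k, (a i, b i) ∈ M ∧ CovByWithin S (a (i + 1)) (b i)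

/-- The critical elements of a matching `M` on the subposet induced on `S`: the elements
of `S` occurring in no pair of `M`. -/
def criticalSet (S : Set P) (M : Set (P × P)) : Set P :=
  {x ∈ S | ∀ p ∈ M, p.1 ≠ x ∧ p.2 ≠ x}

end Matchings

/-- The partition `v_k = {{1,k}} ∪ {{j} : j ≠ 1,k}` of `[n]` (with `0` playing the role
of `1`), as a setoid: `x ∼ y` iff `x = y` or both `x` and `y` lie in `{0, k}`. -/
def vSetoid (n : ℕ) [NeZero n] (k : Fin n) : Setoid (Fin n) :=
  ⟨fun x y => x = y ∨ (x ∈ ({0, k} : Set (Fin n)) ∧ y ∈ ({0, k} : Set (Fin n))), by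
    constructor
    · intro x; exact Or.inl rfl
    · rintro x y (rfl | ⟨hx, hy⟩)
      · exact Or.inl rfl
      · exact Or.inr ⟨hy, hx⟩
    · rintro x y z (rfl | ⟨hx, hy⟩) (rfl | ⟨hy', hz⟩)
      · exact Or.inl rfl
      · exact Or.inr ⟨hy', hz⟩
      · exact Or.inr ⟨hx, hy⟩
      · exact Or.inr ⟨hx, hz⟩⟩

/-- The set `V = {v_2, …, v_n}` of partitions of `[n]` having the block `{1, k}` for some
`k ≠ 1` and otherwise only singleton blocks. -/
def Vset (n : ℕ) [NeZero n] : Set (BarPi n) :=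
  {s | ∃ k : Fin n, k ≠ 0 ∧ s.1 = vSetoid n k}

/-!
Write `α` for `{{1}, {2, …, n}}`. For a chain `σ` let `B σ` be the set of its members that do not
refine `α` (those in which `1` is not a singleton block), and let `x σ := α ⊓ ⋀ B σ`: it is `α`
itself when `B σ = ∅`, and otherwise the least member of `B σ` with `1` split off into a singleton.
This meet is not `⊥` because that least member is not one of the `v_k`, which are exactly the
partitions `m ≠ ⊥` with `m ⊓ α = ⊥`. Every member of `σ` is comparable with `x σ`, and `x σ ≤ α`, so
`x σ ∉ V` and adding or removing `x σ` changes neither `B σ` nor `x σ`. Hence toggling `x σ` is a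
matching, equivariant because `S_1 × S_{n-1}` fixes `α`. Along a cycle `B` can only shrink, so it
is constant; then `x` is constant and the chains strictly shrink, which is absurd. A critical
chain can be neither extended nor reduced by `x σ`, so it is `{x σ}`; then `B σ = ∅` and it is
`{α}`.
-/

theorem ZMod.le_of_forall_apply_add_one_le {k : ℕ} [NeZero k] {β : Type*} [Preorder β]
    {f : ZMod k → β} (h : ∀ i, f (i + 1) ≤ f i) (i j : ZMod k) : f j ≤ f i := by
  have hnat : ∀ m : ℕ, f (i + m) ≤ f i := by
    intro m
    induction m with
    | zero => simp
    | succ m ih =>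
      rw [Nat.cast_succ, ← add_assoc]
      exact (h (i + m)).trans ih
  simpa using hnat (j - i).val

theorem Finset.exists_isLeast_of_isChain {L : Type*} [PartialOrder L] {B : Finset L}
    (hB : B.Nonempty) (hchain : IsChain (· ≤ ·) (B : Set L)) : ∃ m, IsLeast (B : Set L) m := by
  obtain ⟨m, hmB, hmin⟩ := B.exists_minimal hB
  refine ⟨m, hmB, fun b hb => ?_⟩
  rcases eq_or_ne m b with rfl | hne
  · exact le_rfl
  · exact (hchain hmB hb hne).elim id fun hbm => (hmin hb hbm).antisymm hbm ▸ le_rfl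

namespace PivotMatching

variable {P α : Type*} [DecidableEq α]

section

variable (c : P → Finset α) (q : α → Prop) [DecidablePred q] (π : Finset α → α)

def pivot (a : P) : α := π ((c a).filter q)

def matching (S : Set P) : Set (P × P) :=
  {p | p.1 ∈ S ∧ p.2 ∈ S ∧ pivot c q π p.1 ∉ c p.1 ∧ c p.2 = insert (pivot c q π p.1) (c p.1)}

end

variable {c : P → Finset α} {q : α → Prop} [DecidablePred q] {π : Finset α → α} {S : Set P}

theorem pivot_eq_of_eq_insert (hπ : ∀ s, ¬q (π s)) {a b : P} {s : Finset α}
    (h : c b = insert (π s) (c a)) : pivot c q π b = pivot c q π a := by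
  simp only [pivot, h, Finset.filter_insert, hπ, if_false]

theorem covByWithin_of_eq_insert [PartialOrder P] (hc : ∀ a b, a ≤ b ↔ c a ⊆ c b)
    {a b : P} {x : α} (ha : a ∈ S) (hb : b ∈ S) (hx : x ∉ c a) (h : c b = insert x (c a)) :
    CovByWithin S a b := by
  have hlt : ∀ a b, a < b ↔ c a ⊂ c b := fun a b => by
    rw [lt_iff_le_not_ge, hc, hc, Finset.ssubset_def]
  refine ⟨ha, hb, (hlt a b).2 (h ▸ Finset.ssubset_insert hx), fun d _ had hdb => ?_⟩
  have had' := Finset.card_lt_card ((hlt a d).1 had)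
  have hdb' := Finset.card_lt_card ((hlt d b).1 hdb)
  rw [h, Finset.card_insert_of_notMem hx] at hdb'
  omega

theorem isMatchingOn_matching [PartialOrder P] (hc : ∀ a b, a ≤ b ↔ c a ⊆ c b)
    (hπ : ∀ s, ¬q (π s)) : IsMatchingOn S (matching c q π S) := by
  have hinj : ∀ {a b}, c a = c b → a = b := fun h =>
    le_antisymm ((hc _ _).2 h.le) ((hc _ _).2 h.ge)
  refine ⟨fun p ⟨h1, h2, hx, h⟩ => covByWithin_of_eq_insert hc h1 h2 hx h, ?_⟩
  rintro ⟨a, b⟩ ⟨-, -, hxa, hb⟩ ⟨a', b'⟩ ⟨-, -, hxa', hb'⟩ heq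
  have hpb : pivot c q π b = pivot c q π a := pivot_eq_of_eq_insert hπ hb
  have hpb' : pivot c q π b' = pivot c q π a' := pivot_eq_of_eq_insert hπ hb'
  simp only at heq hxa hxa' hb hb' hpb hpb'
  rcases heq with rfl | rfl | rfl | rfl
  · exact Prod.ext rfl (hinj (hb.trans hb'.symm))
  · exact (hxa (by rw [hb', hpb']; exact Finset.mem_insert_self _ _)).elim
  · exact (hxa' (by rw [hb, hpb]; exact Finset.mem_insert_self _ _)).elim
  · have hpa : pivot c q π a = pivot c q π a' := hpb.symm.trans hpb'
    have hca : c a = c a' := by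
      rw [← Finset.erase_insert hxa, ← hb, hpa, ← Finset.erase_insert hxa', ← hb']
    exact Prod.ext (hinj hca) rfl

theorem isAcyclicMatchingOn_matching [PartialOrder P] (hc : ∀ a b, a ≤ b ↔ c a ⊆ c b)
    (hπ : ∀ s, ¬q (π s)) : IsAcyclicMatchingOn S (matching c q π S) := by
  refine ⟨isMatchingOn_matching hc hπ, ?_⟩
  rintro ⟨k, a, b, hk, ha, hcycle⟩
  have : NeZero k := ⟨by omega⟩
  have : Fact (1 < k) := ⟨by omega⟩
  have hstep : ∀ i, c (a (i + 1)) ⊆ insert (pivot c q π (a i)) (c (a i)) := fun i =>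
    (hcycle i).1.2.2.2 ▸ (hc _ _).1 (hcycle i).2.2.2.1.le
  -- `(c ·).filter q` can only shrink along the cycle, hence it is constant, and so is the pivot
  have hfilter : ∀ i j, (c (a j)).filter q ≤ (c (a i)).filter q :=
    ZMod.le_of_forall_apply_add_one_le fun i => by
      simpa only [pivot, Finset.filter_insert, hπ, if_false] using
        Finset.filter_subset_filter q (hstep i)
  have hpivot : ∀ i, pivot c q π (a (i + 1)) = pivot c q π (a i) := fun i =>
    congrArg π ((hfilter _ _).antisymm (hfilter _ _))
  have hcard : ∀ i, (c (a (i + 1))).card < (c (a i)).card := by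
    intro i
    refine Finset.card_lt_card (Finset.ssubset_iff_subset_ne.2 ⟨?_, fun h => ?_⟩)
    · rw [← Finset.subset_insert_iff_of_notMem ((hpivot i) ▸ (hcycle (i + 1)).1.2.2.1)]
      exact hstep i
    · have : i + 1 = i := ha (le_antisymm ((hc _ _).2 h.le) ((hc _ _).2 h.ge))
      exact one_ne_zero (add_eq_left.1 this)
  exact (hcard 0).not_ge
    (ZMod.le_of_forall_apply_add_one_le (f := fun i => (c (a i)).card) (fun i => (hcard i).le) _ _)

theorem criticalSet_matching (hπ : ∀ s, ¬q (π s)) (hne : ∀ a, (c a).Nonempty)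
    (hup : ∀ a ∈ S, pivot c q π a ∉ c a → ∃ b ∈ S, c b = insert (pivot c q π a) (c a))
    (hdown : ∀ a ∈ S, ((c a).erase (pivot c q π a)).Nonempty →
      ∃ b ∈ S, c b = (c a).erase (pivot c q π a)) :
    criticalSet S (matching c q π S) = {a ∈ S | c a = {pivot c q π a}} := by
  ext a
  constructor
  · rintro ⟨haS, hcrit⟩
    refine ⟨haS, ?_⟩
    by_cases hxa : pivot c q π a ∈ c a
    · by_contra hsingle
      have hne' : ((c a).erase (pivot c q π a)).Nonempty := by
        rwa [Finset.erase_nonempty hxa, Finset.nontrivial_iff_ne_singleton hxa]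
      obtain ⟨b, hbS, hb⟩ := hdown a haS hne'
      have hab : c a = insert (pivot c q π a) (c b) := by rw [hb, Finset.insert_erase hxa]
      have hpivot : pivot c q π a = pivot c q π b := pivot_eq_of_eq_insert hπ hab
      refine (hcrit (b, a) ⟨hbS, haS, ?_, hpivot ▸ hab⟩).2 rfl
      rw [← hpivot, hb]
      exact Finset.notMem_erase _ _
    · obtain ⟨b, hbS, hb⟩ := hup a haS hxa
      exact ((hcrit (a, b) ⟨haS, hbS, hxa, hb⟩).1 rfl).elim
  · rintro ⟨haS, hsingle⟩
    refine ⟨haS, ?_⟩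
    rintro ⟨a', b⟩ ⟨-, -, hxa', hb⟩
    simp only at hxa' hb ⊢
    refine ⟨?_, ?_⟩
    · rintro rfl
      exact hxa' (hsingle ▸ Finset.mem_singleton_self _)
    · rintro rfl
      have hcard := congrArg Finset.card hb
      rw [hsingle, Finset.card_singleton, Finset.card_insert_of_notMem hxa'] at hcard
      exact (hne a').card_pos.ne' (by omega)

theorem smul_mem_matching {G : Type*} [Group G] [MulAction G P] [MulAction G α] {g : G}
    (hS : ∀ a ∈ S, g • a ∈ S) (hcg : ∀ a, c (g • a) = (c a).image (g • ·))
    (hqg : ∀ x, q (g • x) ↔ q x) (hπg : ∀ s, π (s.image (g • ·)) = g • π s)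
    {p : P × P} (hp : p ∈ matching c q π S) : (g • p.1, g • p.2) ∈ matching c q π S := by
  have hpivot : ∀ a, pivot c q π (g • a) = g • pivot c q π a := fun a => by
    simp only [pivot, hcg, Finset.filter_image, hqg, hπg]
  obtain ⟨h1, h2, hx, h⟩ := hp
  refine ⟨hS _ h1, hS _ h2, ?_, ?_⟩
  · rwa [hpivot, hcg, (MulAction.injective g).mem_finset_image]
  · rw [hcg, hcg, h, Finset.image_insert, hpivot]

end PivotMatching

section Relabeling

variable {n : ℕ}

theorem perm_smul_le_perm_smul_iff (g : Equiv.Perm (Fin n)) {s t : Setoid (Fin n)} :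
    g • s ≤ g • t ↔ s ≤ t :=
  ⟨fun h => by simpa using perm_smul_mono n g⁻¹ h, fun h => perm_smul_mono n g h⟩

theorem perm_smul_inf (g : Equiv.Perm (Fin n)) (s t : Setoid (Fin n)) :
    g • (s ⊓ t) = g • s ⊓ g • t :=
  Setoid.ext fun _ _ => Iff.rfl

theorem perm_smul_finset_inf (g : Equiv.Perm (Fin n)) (B : Finset (BarPi n)) :
    g • B.inf (·.1) = (B.image (g • ·) : Finset (BarPi n)).inf (·.1) := by
  rw [Finset.inf_image]
  exact Finset.apply_inf_eq_inf_comp (g • ·) (perm_smul_inf g) (perm_smul_top n g)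

theorem BarPi.smul_le_smul_iff (g : Equiv.Perm (Fin n)) {s t : BarPi n} :
    g • s ≤ g • t ↔ s ≤ t :=
  perm_smul_le_perm_smul_iff g

variable [NeZero n] {g : Equiv.Perm (Fin n)}

theorem apply_eq_zero_iff_of_mem_S1Sn (hg : g ∈ S1Sn n) {x : Fin n} : g x = 0 ↔ x = 0 :=
  ⟨fun h => g.injective (h.trans (show g 0 = 0 from hg).symm), fun h => by rw [h]; exact hg⟩

theorem perm_smul_alphaSetoid (hg : g ∈ S1Sn n) : g • alphaSetoid n = alphaSetoid n :=
  Setoid.ext fun x y => by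
    rw [perm_smul_setoid_rel]
    show (g⁻¹ x = g⁻¹ y ∨ (g⁻¹ x ≠ 0 ∧ g⁻¹ y ≠ 0)) ↔ (x = y ∨ (x ≠ 0 ∧ y ≠ 0))
    simp only [ne_eq, (g⁻¹).injective.eq_iff, apply_eq_zero_iff_of_mem_S1Sn (inv_mem hg)]

theorem perm_smul_vSetoid (hg : g ∈ S1Sn n) (k : Fin n) : g • vSetoid n k = vSetoid n (g k) :=
  Setoid.ext fun x y => by
    rw [perm_smul_setoid_rel]
    show (g⁻¹ x = g⁻¹ y ∨ (g⁻¹ x ∈ ({0, k} : Set (Fin n)) ∧ g⁻¹ y ∈ ({0, k} : Set (Fin n))))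
      ↔ (x = y ∨ (x ∈ ({0, g k} : Set (Fin n)) ∧ y ∈ ({0, g k} : Set (Fin n))))
    simp only [Set.mem_insert_iff, Set.mem_singleton_iff, (g⁻¹).injective.eq_iff,
      apply_eq_zero_iff_of_mem_S1Sn (inv_mem hg), Equiv.Perm.inv_eq_iff_eq]

theorem smul_alphaBar (hn : 3 ≤ n) (hg : g ∈ S1Sn n) : g • alphaBar n hn = alphaBar n hn :=
  Subtype.ext (perm_smul_alphaSetoid hg)

theorem smul_le_alphaBar_iff (hn : 3 ≤ n) (hg : g ∈ S1Sn n) {s : BarPi n} :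
    g • s ≤ alphaBar n hn ↔ s ≤ alphaBar n hn := by
  conv_rhs => rw [← BarPi.smul_le_smul_iff g, smul_alphaBar hn hg]

theorem smul_mem_Vset (hg : g ∈ S1Sn n) {s : BarPi n} (hs : s ∈ Vset n) : g • s ∈ Vset n := by
  obtain ⟨k, hk, hsk⟩ := hs
  refine ⟨g k, (apply_eq_zero_iff_of_mem_S1Sn hg).not.2 hk, ?_⟩
  show g • s.1 = _
  rw [hsk, perm_smul_vSetoid hg]

theorem smul_mem_Vset_iff (hg : g ∈ S1Sn n) {s : BarPi n} : g • s ∈ Vset n ↔ s ∈ Vset n :=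
  ⟨fun h => by simpa using smul_mem_Vset (inv_mem hg) h, smul_mem_Vset hg⟩

end Relabeling

section Pivot

variable {n : ℕ} [NeZero n]

theorem notMem_Vset_of_le_alphaBar (hn : 3 ≤ n) {s : BarPi n} (hs : s ≤ alphaBar n hn) :
    s ∉ Vset n := by
  rintro ⟨k, hk, hsk⟩
  have h0k : s.1 0 k := by
    rw [hsk]
    exact Or.inr ⟨Set.mem_insert _ _, Set.mem_insert_of_mem _ rfl⟩
  rcases hs h0k with h | ⟨h0, -⟩
  · exact hk h.symm
  · exact h0 rfl

theorem inf_alphaSetoid_ne_bot {m : BarPi n} (hm : m ∉ Vset n) : m.1 ⊓ alphaSetoid n ≠ ⊥ := by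
  intro hbot
  have hsep : ∀ x y, m.1 x y → x ≠ 0 → y ≠ 0 → x = y := fun x y hxy hx hy => by
    have : (m.1 ⊓ alphaSetoid n) x y := Setoid.inf_iff_and.2 ⟨hxy, Or.inr ⟨hx, hy⟩⟩
    rwa [hbot, Setoid.bot_def] at this
  obtain ⟨k, hk, h0k⟩ : ∃ k, k ≠ 0 ∧ m.1 0 k := by
    by_contra! h
    refine m.2.1 (Setoid.ext fun x y => ?_)
    rw [Setoid.bot_def]
    refine ⟨fun hxy => ?_, fun hxy => hxy ▸ m.1.refl x⟩
    by_cases hx : x = 0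
    · subst hx
      exact not_not.1 fun hy => h y (Ne.symm hy) hxy
    by_cases hy : y = 0
    · subst hy
      exact absurd (m.1.symm hxy) (h x hx)
    exact hsep x y hxy hx hy
  have hblock : ∀ z, m.1 0 z ↔ z ∈ ({0, k} : Set (Fin n)) := fun z => by
    refine ⟨fun h0z => ?_, ?_⟩
    · by_cases hz : z = 0
      · exact Or.inl hz
      · exact Or.inr (hsep z k (m.1.trans (m.1.symm h0z) h0k) hz hk)
    · rintro (rfl | rfl)
      exacts [m.1.refl 0, h0k]
  refine hm ⟨k, hk, Setoid.ext fun x y => ⟨fun hxy => ?_, ?_⟩⟩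
  · by_cases hx : x = 0
    · subst hx
      exact Or.inr ⟨Or.inl rfl, (hblock y).1 hxy⟩
    by_cases hy : y = 0
    · subst hy
      exact Or.inr ⟨(hblock x).1 (m.1.symm hxy), Or.inl rfl⟩
    exact Or.inl (hsep x y hxy hx hy)
  · rintro (rfl | ⟨hx, hy⟩)
    · exact m.1.refl x
    · exact m.1.trans (m.1.symm ((hblock x).2 hx)) ((hblock y).2 hy)

def BarPi.mk (s : Setoid (Fin n)) (hbot : s ≠ ⊥) (htop : s ≠ ⊤) : BarPi n := ⟨s, hbot, htop⟩

def pivotSetoid (B : Finset (BarPi n)) : Setoid (Fin n) :=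
  B.inf (·.1) ⊓ alphaSetoid n

open Classical in
/-- The value `alphaBar` in the degenerate case `pivotSetoid B = ⊥` is a placeholder: it does not
occur for the chains that avoid `Vset n`. -/
noncomputable def pivotPartition (hn : 3 ≤ n) (B : Finset (BarPi n)) : BarPi n :=
  if h : pivotSetoid B = ⊥ then alphaBar n hn
  else BarPi.mk (pivotSetoid B) h (ne_top_of_le_ne_top (alphaBar n hn).2.2 inf_le_right)

theorem pivotPartition_le_alphaBar (hn : 3 ≤ n) (B : Finset (BarPi n)) :
    pivotPartition hn B ≤ alphaBar n hn := by
  unfold pivotPartition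
  split_ifs
  exacts [le_rfl, inf_le_right (a := B.inf (·.1))]

theorem pivotPartition_empty (hn : 3 ≤ n) : pivotPartition hn ∅ = alphaBar n hn := by
  unfold pivotPartition
  split_ifs
  exacts [rfl, Subtype.ext (top_inf_eq _)]

theorem val_pivotPartition (hn : 3 ≤ n) {B : Finset (BarPi n)} (h : pivotSetoid B ≠ ⊥) :
    (pivotPartition hn B).1 = pivotSetoid B := by
  rw [pivotPartition, dif_neg h]
  rfl

theorem pivotPartition_image_smul (hn : 3 ≤ n) {g : Equiv.Perm (Fin n)} (hg : g ∈ S1Sn n)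
    (B : Finset (BarPi n)) :
    pivotPartition hn (B.image (g • ·)) = g • pivotPartition hn B := by
  have hset : pivotSetoid (B.image (g • ·)) = g • pivotSetoid B := by
    rw [pivotSetoid, pivotSetoid, perm_smul_inf, perm_smul_finset_inf, perm_smul_alphaSetoid hg]
  have hbot : g • pivotSetoid B = ⊥ ↔ pivotSetoid B = ⊥ := by
    rw [smul_eq_iff_eq_inv_smul, perm_smul_bot]
  unfold pivotPartition
  by_cases h : pivotSetoid B = ⊥
  · rw [dif_pos h, dif_pos (by rw [hset, h, perm_smul_bot]), smul_alphaBar hn hg]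
  · rw [dif_neg h, dif_neg (by rwa [hset, hbot])]
    exact Subtype.ext hset

theorem pivotSetoid_ne_bot (hn : 3 ≤ n) {B : Finset (BarPi n)}
    (hchain : IsChain (· ≤ ·) (B : Set (BarPi n))) (hV : ∀ s ∈ B, s ∉ Vset n) :
    pivotSetoid B ≠ ⊥ := by
  rcases B.eq_empty_or_nonempty with rfl | hne
  · rw [pivotSetoid, Finset.inf_empty, top_inf_eq]
    exact (alphaBar n hn).2.1
  obtain ⟨m, hmB, hleast⟩ := Finset.exists_isLeast_of_isChain hne hchain
  have hinf : B.inf (·.1) = m.1 :=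
    le_antisymm (Finset.inf_le hmB) (Finset.le_inf fun b hb => hleast hb)
  rw [pivotSetoid, hinf]
  exact inf_alphaSetoid_ne_bot (hV m hmB)

end Pivot

def chainsAvoidingV (n : ℕ) [NeZero n] : Set (FacePoset n) :=
  {σ | ∀ s ∈ σ.1, s ∉ Vset n}

section ChainMatching

variable {n : ℕ} [NeZero n]

open Classical

noncomputable def chainPivot (hn : 3 ≤ n) (σ : FacePoset n) : BarPi n :=
  PivotMatching.pivot (fun σ : FacePoset n => σ.1) (¬· ≤ alphaBar n hn) (pivotPartition hn) σ

noncomputable def chainMatching (hn : 3 ≤ n) : Set (FacePoset n × FacePoset n) :=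
  PivotMatching.matching (fun σ : FacePoset n => σ.1) (¬· ≤ alphaBar n hn) (pivotPartition hn)
    (chainsAvoidingV n)

theorem chainPivot_le_alphaBar (hn : 3 ≤ n) (σ : FacePoset n) : chainPivot hn σ ≤ alphaBar n hn :=
  pivotPartition_le_alphaBar hn _

theorem chainPivot_of_forall_le_alphaBar (hn : 3 ≤ n) {σ : FacePoset n}
    (h : ∀ s ∈ σ.1, s ≤ alphaBar n hn) : chainPivot hn σ = alphaBar n hn := by
  rw [chainPivot, PivotMatching.pivot, Finset.filter_false_of_mem fun s hs hsa => hsa (h s hs),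
    pivotPartition_empty]

theorem le_or_ge_chainPivot (hn : 3 ≤ n) {σ : FacePoset n} (hσ : σ ∈ chainsAvoidingV n)
    {s : BarPi n} (hs : s ∈ σ.1) : s ≤ chainPivot hn σ ∨ chainPivot hn σ ≤ s := by
  set B := σ.1.filter (¬· ≤ alphaBar n hn)
  have hval : (chainPivot hn σ).1 = B.inf (·.1) ⊓ alphaSetoid n :=
    val_pivotPartition hn (pivotSetoid_ne_bot hn
      (σ.2.2.mono (Finset.coe_subset.2 (Finset.filter_subset _ _)))
      fun s hs => hσ s (Finset.mem_filter.1 hs).1)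
  by_cases hsa : s ≤ alphaBar n hn
  · left
    show s.1 ≤ _
    rw [hval]
    refine le_inf (Finset.le_inf fun b hb => ?_) hsa
    obtain ⟨hbσ, hba⟩ := Finset.mem_filter.1 hb
    exact (σ.2.2.total hs hbσ).resolve_right fun hbs => hba (hbs.trans hsa)
  · right
    show _ ≤ s.1
    rw [hval]
    exact inf_le_left.trans (Finset.inf_le (Finset.mem_filter.2 ⟨hs, hsa⟩))

theorem exists_chainsAvoidingV_eq_insert_chainPivot (hn : 3 ≤ n) {σ : FacePoset n}
    (hσ : σ ∈ chainsAvoidingV n) :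
    ∃ τ ∈ chainsAvoidingV n, τ.1 = insert (chainPivot hn σ) σ.1 := by
  refine ⟨⟨insert (chainPivot hn σ) σ.1, Finset.insert_nonempty _ _, ?_⟩, ?_, rfl⟩
  · rw [Finset.coe_insert]
    exact σ.2.2.insert fun b hb _ => (le_or_ge_chainPivot hn hσ hb).symm
  · intro s hs
    rcases Finset.mem_insert.1 hs with rfl | hs
    · exact notMem_Vset_of_le_alphaBar hn (chainPivot_le_alphaBar hn σ)
    · exact hσ s hs

theorem exists_chainsAvoidingV_eq_erase {σ : FacePoset n} (hσ : σ ∈ chainsAvoidingV n)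
    {x : BarPi n} (hne : (σ.1.erase x).Nonempty) : ∃ ρ ∈ chainsAvoidingV n, ρ.1 = σ.1.erase x :=
  ⟨⟨σ.1.erase x, hne, σ.2.2.mono (Finset.coe_subset.2 (Finset.erase_subset _ _))⟩,
    fun s hs => hσ s (Finset.mem_of_mem_erase hs), rfl⟩

theorem eq_singleton_chainPivot_iff (hn : 3 ≤ n) {σ : FacePoset n} :
    σ.1 = {chainPivot hn σ} ↔ σ = alphaChain n hn := by
  constructor
  · intro h
    have hpivot : chainPivot hn σ = alphaBar n hn :=
      chainPivot_of_forall_le_alphaBar hn fun s hs => by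
        rw [h, Finset.mem_singleton] at hs
        exact hs ▸ chainPivot_le_alphaBar hn σ
    exact Subtype.ext (h.trans (by rw [hpivot]; rfl))
  · rintro rfl
    rw [chainPivot_of_forall_le_alphaBar hn fun s hs => (Finset.mem_singleton.1 hs).le]
    rfl

theorem isAcyclicMatchingOn_chainMatching (hn : 3 ≤ n) :
    IsAcyclicMatchingOn (chainsAvoidingV n) (chainMatching hn) :=
  PivotMatching.isAcyclicMatchingOn_matching (fun _ _ => Iff.rfl)
    fun B h => h (pivotPartition_le_alphaBar hn B)

theorem smul_mem_chainMatching (hn : 3 ≤ n) {g : Equiv.Perm (Fin n)} (hg : g ∈ S1Sn n)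
    {p : FacePoset n × FacePoset n} (hp : p ∈ chainMatching hn) :
    (g • p.1, g • p.2) ∈ chainMatching hn := by
  refine PivotMatching.smul_mem_matching (fun σ hσ s hs => ?_) (fun _ => rfl)
    (fun _ => (smul_le_alphaBar_iff hn hg).not) (pivotPartition_image_smul hn hg) hp
  obtain ⟨t, ht, rfl⟩ := Finset.mem_image.1 hs
  exact (smul_mem_Vset_iff hg).not.2 (hσ t ht)

theorem criticalSet_chainMatching (hn : 3 ≤ n) :
    criticalSet (chainsAvoidingV n) (chainMatching hn) = {alphaChain n hn} := by
  rw [chainMatching,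
    PivotMatching.criticalSet_matching (fun B h => h (pivotPartition_le_alphaBar hn B))
    (fun σ => σ.2.1) (fun σ hσ _ => exists_chainsAvoidingV_eq_insert_chainPivot hn hσ)
    (fun σ hσ hne => exists_chainsAvoidingV_eq_erase hσ hne)]
  ext σ
  refine ⟨fun ⟨_, h⟩ => (eq_singleton_chainPivot_iff hn).1 h, ?_⟩
  rintro rfl
  refine ⟨fun s hs => notMem_Vset_of_le_alphaBar hn (Finset.mem_singleton.1 hs).le,
    (eq_singleton_chainPivot_iff hn).2 rfl⟩

end ChainMatching

/-- For every `n ≥ 3`, there exists an `(S_1 × S_{n-1})`-equivariant acyclic matching on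
the subposet of the face poset of the nerve of `Π̄_n` consisting of all nonempty chains
containing no partition of the form `v_k`, such that the one-element chain
`α_n = {{{1},{2,…,n}}}` is the only critical element. -/
theorem exists_equivariant_matching_fiber_zero (n : ℕ) [NeZero n] (hn : 3 ≤ n) :
    ∃ M : Set (FacePoset n × FacePoset n),
      IsAcyclicMatchingOn {c : FacePoset n | ∀ s ∈ c.1, s ∉ Vset n} M ∧
      (∀ g ∈ S1Sn n, ∀ p ∈ M, (g • p.1, g • p.2) ∈ M) ∧
      criticalSet {c : FacePoset n | ∀ s ∈ c.1, s ∉ Vset n} M = {alphaChain n hn} :=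
  ⟨chainMatching hn, isAcyclicMatchingOn_chainMatching hn,
    fun _ hg _ hp => smul_mem_chainMatching hn hg hp, criticalSet_chainMatching hn⟩
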